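/- Let $P$ be a poset, $F \subseteq P^P$, and $X \subseteq P$. Define $\bar{X}^{FO_i}$ to be the set of $x \in P$ such that there is a net in $X$ which $FO_i$-converges to $x$, for $i = 1,2$. Then $\bar{X}^{FO_1} = \bar{X}^{FO_2}$. In particular, a subset $X \subseteq P$ is $FO_1$-closed if and only if it is $FO_2$-closed. -/

import Mathlib

/-- Eventually, for nets indexed by a preordered set. -/
def EvAtTop {Γ : Type*} [Preorder Γ] (p : Γ → Prop) : Prop :=
  ∃ γ₀, ∀ γ, γ₀ ≤ γ → p γ

/-- $O_1$-convergence of a net to a point in a poset. -/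
def O1Conv {P : Type*} {Γ : Type*} [PartialOrder P] [Preorder Γ]
    (x : Γ → P) (l : P) : Prop :=
  ∃ y z : Γ → P, Monotone y ∧ Antitone z ∧
    IsLUB (Set.range y) l ∧ IsGLB (Set.range z) l ∧
    EvAtTop (fun γ => y γ ≤ x γ ∧ x γ ≤ z γ)

/-- $O_2$-convergence of a net to a point in a poset. -/
def O2Conv {P : Type*} {Γ : Type*} [PartialOrder P] [Preorder Γ]
    (x : Γ → P) (l : P) : Prop :=
  ∃ M N : Set P, M.Nonempty ∧ DirectedOn (· ≤ ·) M ∧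
    N.Nonempty ∧ DirectedOn (· ≥ ·) N ∧
    IsLUB M l ∧ IsGLB N l ∧
    ∀ m ∈ M, ∀ n ∈ N, EvAtTop (fun γ => m ≤ x γ ∧ x γ ≤ n)


/-- A bundled nonempty directed preordered index type. -/
structure DirectedIndex : Type (u + 1) where
  carrier : Type u
  [pre : Preorder carrier]
  [nonempty : Nonempty carrier]
  [directed : IsDirected carrier (· ≤ ·)]

attribute [instance] DirectedIndex.pre DirectedIndex.nonempty DirectedIndex.directed

universe u

/-- The $FO_1$-closure of a subset of a poset. -/
def FO1Closure {P : Type u} [PartialOrder P] (F : Set (P → P)) (X : Set P) : Set P :=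
  {x | ∃ (Λ : DirectedIndex.{u}) (s : Λ.carrier → P),
    (∀ γ, s γ ∈ X) ∧ ∀ f ∈ F, O1Conv (fun γ => f (s γ)) (f x)}

/-- The $FO_2$-closure of a subset of a poset. -/
def FO2Closure {P : Type u} [PartialOrder P] (F : Set (P → P)) (X : Set P) : Set P :=
  {x | ∃ (Λ : DirectedIndex.{u}) (s : Λ.carrier → P),
    (∀ γ, s γ ∈ X) ∧ ∀ f ∈ F, O2Conv (fun γ => f (s γ)) (f x)}


/-!
An `O₁`-convergent net is `O₂`-convergent: take `M` and `N` to be the ranges of the monotone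
and antitone sandwiching nets. Conversely, suppose that for every `f ∈ F` the net `f ∘ s`
is `O₂`-sandwiched by a directed `M f` and a filtered `N f`. Reindex `s` by tuples consisting
of an index `γ`, bounds `mᶠ ∈ M f`, `nᶠ ∈ N f` for every `f`, and a finite set of `f` for which
`mᶠ ≤ f (s γ) ≤ nᶠ` already holds, ordered componentwise (with `nᶠ` ordered dually).
Directedness of this index uses that finitely many eventual conditions hold simultaneously;
the bounds `mᶠ`, `nᶠ` are then monotone resp. antitone nets whose ranges are all of `M f`,
`N f`, so `f ∘ s` `O₁`-converges along the new index.
-/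

open Filter

theorem evAtTop_iff_eventually {Γ : Type*} [Preorder Γ] [Nonempty Γ] [IsDirected Γ (· ≤ ·)]
    {p : Γ → Prop} : EvAtTop p ↔ ∀ᶠ γ in atTop, p γ :=
  eventually_atTop.symm

theorem O1Conv.o2Conv {P Γ : Type*} [PartialOrder P] [Preorder Γ] [Nonempty Γ]
    [IsDirected Γ (· ≤ ·)] {x : Γ → P} {l : P} (h : O1Conv x l) : O2Conv x l := by
  obtain ⟨y, z, hy, hz, hlub, hglb, hsandwich⟩ := h
  refine ⟨Set.range y, Set.range z, Set.range_nonempty _, directedOn_range.2 hy.directed_le,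
    Set.range_nonempty _, directedOn_range.2 hz.directed_ge, hlub, hglb, ?_⟩
  rintro _ ⟨a, rfl⟩ _ ⟨b, rfl⟩
  rw [evAtTop_iff_eventually] at hsandwich ⊢
  filter_upwards [eventually_ge_atTop a, eventually_ge_atTop b, hsandwich] with γ ha hb hγ
  exact ⟨(hy ha).trans hγ.1, hγ.2.trans (hz hb)⟩

structure SandwichIndex {ι Γ P : Type u} [Preorder P] (x : ι → Γ → P) (M N : ι → Set P) :
    Type u where
  point : Γ
  lower : ι → P
  upper : ι → P
  support : Set ι
  lower_mem : ∀ i, lower i ∈ M i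
  upper_mem : ∀ i, upper i ∈ N i
  support_finite : support.Finite
  mem_Icc : ∀ i ∈ support, x i point ∈ Set.Icc (lower i) (upper i)

namespace SandwichIndex

variable {ι Γ P : Type u} [Preorder Γ] [Preorder P] {x : ι → Γ → P} {M N : ι → Set P}

instance : Preorder (SandwichIndex x M N) :=
  Preorder.lift fun d => (d.point, d.support, d.lower, OrderDual.toDual ∘ d.upper)

theorem le_iff {d e : SandwichIndex x M N} :
    d ≤ e ↔ d.point ≤ e.point ∧ d.support ⊆ e.support ∧
      (∀ i, d.lower i ≤ e.lower i) ∧ ∀ i, e.upper i ≤ d.upper i :=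
  Iff.rfl

theorem monotone_lower (i : ι) : Monotone fun d : SandwichIndex x M N => d.lower i :=
  fun _ _ h => (le_iff.1 h).2.2.1 i

theorem antitone_upper (i : ι) : Antitone fun d : SandwichIndex x M N => d.upper i :=
  fun _ _ h => (le_iff.1 h).2.2.2 i

theorem isDirected [Nonempty Γ] [IsDirected Γ (· ≤ ·)] (hM : ∀ i, DirectedOn (· ≤ ·) (M i))
    (hN : ∀ i, DirectedOn (· ≥ ·) (N i))
    (hx : ∀ i, ∀ m ∈ M i, ∀ n ∈ N i, EvAtTop fun γ => m ≤ x i γ ∧ x i γ ≤ n) :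
    IsDirected (SandwichIndex x M N) (· ≤ ·) := by
  refine ⟨fun d e => ?_⟩
  choose m hm hdm hem using fun i => hM i _ (d.lower_mem i) _ (e.lower_mem i)
  choose n hn hdn hen using fun i => hN i _ (d.upper_mem i) _ (e.upper_mem i)
  have hS := d.support_finite.union e.support_finite
  obtain ⟨γ, hγ, hdγ, heγ⟩ := (((eventually_all_finite hS).2 fun i _ =>
    evAtTop_iff_eventually.1 (hx i _ (hm i) _ (hn i))).and
      ((eventually_ge_atTop d.point).and (eventually_ge_atTop e.point))).exists
  exact ⟨⟨γ, m, n, _, hm, hn, hS, hγ⟩, le_iff.2 ⟨hdγ, Set.subset_union_left, hdm, hdn⟩,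
    le_iff.2 ⟨heγ, Set.subset_union_right, hem, hen⟩⟩

variable (hx : ∀ i, ∀ m ∈ M i, ∀ n ∈ N i, EvAtTop fun γ => m ≤ x i γ ∧ x i γ ≤ n)
  {m₀ n₀ : ι → P} (hm₀ : ∀ i, m₀ i ∈ M i) (hn₀ : ∀ i, n₀ i ∈ N i)
include hx hm₀ hn₀

theorem exists_lower_upper_eq {i : ι} {m n : P} (hm : m ∈ M i) (hn : n ∈ N i) :
    ∃ d : SandwichIndex x M N, d.lower i = m ∧ d.upper i = n ∧ i ∈ d.support := by
  classical
  obtain ⟨γ, hγ⟩ := hx i m hm n hn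
  refine ⟨⟨γ, Function.update m₀ i m, Function.update n₀ i n, {i}, fun j => ?_, fun j => ?_,
    Set.finite_singleton i, ?_⟩, by simp, by simp, rfl⟩
  · rcases eq_or_ne j i with rfl | hji <;> simp [*]
  · rcases eq_or_ne j i with rfl | hji <;> simp [*]
  · rintro j rfl
    simpa using hγ γ le_rfl

theorem range_lower (i : ι) : Set.range (fun d : SandwichIndex x M N => d.lower i) = M i :=
  subset_antisymm (Set.range_subset_iff.2 fun d => d.lower_mem i) fun _ hm =>
    let ⟨d, hd, _⟩ := exists_lower_upper_eq hx hm₀ hn₀ hm (hn₀ i)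
    ⟨d, hd⟩

theorem range_upper (i : ι) : Set.range (fun d : SandwichIndex x M N => d.upper i) = N i :=
  subset_antisymm (Set.range_subset_iff.2 fun d => d.upper_mem i) fun _ hn =>
    let ⟨d, _, hd, _⟩ := exists_lower_upper_eq hx hm₀ hn₀ (hm₀ i) hn
    ⟨d, hd⟩

theorem evAtTop_mem_Icc (i : ι) :
    EvAtTop fun d : SandwichIndex x M N => x i d.point ∈ Set.Icc (d.lower i) (d.upper i) :=
  let ⟨d₀, _, _, hd₀⟩ := exists_lower_upper_eq hx hm₀ hn₀ (hm₀ i) (hn₀ i)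
  ⟨d₀, fun d hd => d.mem_Icc i ((le_iff.1 hd).2.1 hd₀)⟩

end SandwichIndex

theorem exists_o1Conv_comp_of_o2Conv {ι Γ P : Type u} [Preorder Γ] [Nonempty Γ]
    [IsDirected Γ (· ≤ ·)] [PartialOrder P] {x : ι → Γ → P} {l : ι → P}
    (h : ∀ i, O2Conv (x i) (l i)) :
    ∃ (Δ : DirectedIndex.{u}) (π : Δ.carrier → Γ), ∀ i, O1Conv (x i ∘ π) (l i) := by
  choose M N hMne hM hNne hN hlub hglb hx using h
  choose m₀ hm₀ using hMne
  choose n₀ hn₀ using hNne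
  have : Nonempty (SandwichIndex x M N) :=
    ⟨⟨Classical.arbitrary Γ, m₀, n₀, ∅, hm₀, hn₀, Set.finite_empty, by simp⟩⟩
  have := SandwichIndex.isDirected hM hN hx
  refine ⟨⟨SandwichIndex x M N⟩, SandwichIndex.point, fun i => ⟨_, _,
    SandwichIndex.monotone_lower i, SandwichIndex.antitone_upper i, ?_, ?_,
    SandwichIndex.evAtTop_mem_Icc hx hm₀ hn₀ i⟩⟩
  · rw [SandwichIndex.range_lower hx hm₀ hn₀]
    exact hlub i
  · rw [SandwichIndex.range_upper hx hm₀ hn₀]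
    exact hglb i

theorem fo2Closure_subset_fo1Closure {P : Type u} [PartialOrder P] (F : Set (P → P))
    (X : Set P) : FO2Closure F X ⊆ FO1Closure F X := by
  rintro x ⟨Λ, s, hs, h⟩
  obtain ⟨Δ, π, hπ⟩ := exists_o1Conv_comp_of_o2Conv (x := fun (f : F) γ => f.1 (s γ))
    (l := fun f => f.1 x) fun f => h f f.2
  exact ⟨Δ, s ∘ π, fun δ => hs (π δ), fun f hf => hπ ⟨f, hf⟩⟩

theorem fo1Closure_eq_fo2Closure {P : Type u} [PartialOrder P]
    (F : Set (P → P)) (X : Set P) :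
    FO1Closure F X = FO2Closure F X ∧
      ((FO1Closure F X ⊆ X) ↔ (FO2Closure F X ⊆ X)) := by
  have heq : FO1Closure F X = FO2Closure F X :=
    subset_antisymm (fun _ ⟨Λ, s, hs, h⟩ => ⟨Λ, s, hs, fun f hf => (h f hf).o2Conv⟩)
      (fo2Closure_subset_fo1Closure F X)
  exact ⟨heq, heq ▸ Iff.rfl⟩
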